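/- Let p, q : ℝ × ℝ → ℝ be smooth functions solving the modified Boussinesq system. Define w = −p_x − (1/2)p² − (3/2)q² and h = −q_{xx} − 3 p q_x − q p_x − 2 q p² + 2 q³. Then (w, h) solves the good Boussinesq system: w_t = h_x and h_t + (1/3) w_{xxx} + (4/3)(w²)_x = 0. -/

import Mathlib

/-- Partial derivative in the first (space) variable. -/
noncomputable def pdx (f : ℝ → ℝ → ℝ) : ℝ → ℝ → ℝ := fun x t => deriv (fun x' => f x' t) x

/-- Partial derivative in the second (time) variable. -/
noncomputable def pdt (f : ℝ → ℝ → ℝ) : ℝ → ℝ → ℝ := fun x t => deriv (fun t' => f x t') t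

/-- The Hirota–Satsuma system. -/
def HirotaSatsuma (u v : ℝ → ℝ → ℝ) : Prop :=
  ∀ x t : ℝ,
    pdt u x t = -(pdx (pdx u) x t) + (2/3) * u x t * pdx u x t + 2 * pdx v x t ∧
    pdt v x t = -(2/3) * pdx (pdx (pdx u)) x t + (2/3) * u x t * pdx (pdx u) x t
      + (2/3) * pdx u x t * v x t - (2/3) * u x t * pdx v x t + pdx (pdx v) x t

/-- The good Boussinesq system. -/
def GoodBoussinesq (w h : ℝ → ℝ → ℝ) : Prop :=
  ∀ x t : ℝ,
    pdt w x t = pdx h x t ∧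
    pdt h x t + (1/3) * pdx (pdx (pdx w)) x t
      + (4/3) * pdx (fun x t => (w x t)^2) x t = 0

/-- The modified Boussinesq system. -/
def ModifiedBoussinesq (p q : ℝ → ℝ → ℝ) : Prop :=
  ∀ x t : ℝ,
    pdt p x t = 2 * pdx (fun x t => p x t * q x t) x t + pdx (pdx q) x t ∧
    pdt q x t = -(1/3) * pdx (pdx p) x t + (2/3) * p x t * pdx p x t
      - 2 * q x t * pdx q x t

def Sm (f : ℝ → ℝ → ℝ) : Prop := ContDiff ℝ (⊤ : ℕ∞) (fun s : ℝ × ℝ => f s.1 s.2)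

lemma Sm.diffX {f : ℝ → ℝ → ℝ} (hf : Sm f) (x t : ℝ) :
    DifferentiableAt ℝ (fun x' => f x' t) x := by
  have h : DifferentiableAt ℝ (fun x' : ℝ => ((x', t) : ℝ × ℝ)) x :=
    differentiableAt_id.prodMk (differentiableAt_const t)
  exact (hf.differentiable (by simp) (x, t)).comp x h

lemma Sm.diffT {f : ℝ → ℝ → ℝ} (hf : Sm f) (x t : ℝ) :
    DifferentiableAt ℝ (fun t' => f x t') t := by
  have h : DifferentiableAt ℝ (fun t' : ℝ => ((x, t') : ℝ × ℝ)) t :=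
    (differentiableAt_const x).prodMk differentiableAt_id
  exact (hf.differentiable (by simp) (x, t)).comp t h

lemma Sm.hdX {f : ℝ → ℝ → ℝ} (hf : Sm f) (x t : ℝ) :
    HasDerivAt (fun x' => f x' t) (pdx f x t) x := (hf.diffX x t).hasDerivAt

lemma Sm.hdT {f : ℝ → ℝ → ℝ} (hf : Sm f) (x t : ℝ) :
    HasDerivAt (fun t' => f x t') (pdt f x t) t := (hf.diffT x t).hasDerivAt

lemma pdx_fd {f : ℝ → ℝ → ℝ} (hf : Sm f) (x t : ℝ) :
    pdx f x t = fderiv ℝ (fun s : ℝ × ℝ => f s.1 s.2) (x, t) (1, 0) := by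
  have h1 : HasDerivAt (fun x' : ℝ => ((x', t) : ℝ × ℝ)) ((1:ℝ), (0:ℝ)) x :=
    (hasDerivAt_id x).prodMk (hasDerivAt_const x t)
  have h2 := (hf.differentiable (by simp) (x, t)).hasFDerivAt
  exact (h2.comp_hasDerivAt x h1).deriv

lemma pdt_fd {f : ℝ → ℝ → ℝ} (hf : Sm f) (x t : ℝ) :
    pdt f x t = fderiv ℝ (fun s : ℝ × ℝ => f s.1 s.2) (x, t) (0, 1) := by
  have h1 : HasDerivAt (fun t' : ℝ => ((x, t') : ℝ × ℝ)) ((0:ℝ), (1:ℝ)) t :=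
    (hasDerivAt_const t x).prodMk (hasDerivAt_id t)
  have h2 := (hf.differentiable (by simp) (x, t)).hasFDerivAt
  exact (h2.comp_hasDerivAt t h1).deriv

lemma Sm.pdx' {f : ℝ → ℝ → ℝ} (hf : Sm f) : Sm (pdx f) := by
  have h : (fun s : ℝ × ℝ => pdx f s.1 s.2)
      = fun s : ℝ × ℝ => fderiv ℝ (fun s : ℝ × ℝ => f s.1 s.2) s ((1:ℝ), (0:ℝ)) := by
    funext s; exact pdx_fd hf s.1 s.2
  unfold Sm; rw [h]
  exact (hf.fderiv_right (by simp)).clm_apply contDiff_const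

lemma Sm.pdt' {f : ℝ → ℝ → ℝ} (hf : Sm f) : Sm (pdt f) := by
  have h : (fun s : ℝ × ℝ => pdt f s.1 s.2)
      = fun s : ℝ × ℝ => fderiv ℝ (fun s : ℝ × ℝ => f s.1 s.2) s ((0:ℝ), (1:ℝ)) := by
    funext s; exact pdt_fd hf s.1 s.2
  unfold Sm; rw [h]
  exact (hf.fderiv_right (by simp)).clm_apply contDiff_const

lemma pd_comm {f : ℝ → ℝ → ℝ} (hf : Sm f) (x t : ℝ) :
    pdt (pdx f) x t = pdx (pdt f) x t := by
  have hdF : Differentiable ℝ (fun s : ℝ × ℝ => f s.1 s.2) := hf.differentiable (by simp)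
  have hg : ContDiff ℝ (⊤ : ℕ∞) (fun s => fderiv ℝ (fun s : ℝ × ℝ => f s.1 s.2) s) :=
    hf.fderiv_right (by simp)
  have hg' : DifferentiableAt ℝ (fderiv ℝ (fun s : ℝ × ℝ => f s.1 s.2)) (x, t) :=
    (hg.differentiable (by simp)) (x, t)
  have hsymm := second_derivative_symmetric
      (fun y => (hdF y).hasFDerivAt) hg'.hasFDerivAt ((0:ℝ), (1:ℝ)) ((1:ℝ), (0:ℝ))
  have e1 := pdt_fd hf.pdx' x t
  have e2 := pdx_fd hf.pdt' x t
  have r1 : (fun s : ℝ × ℝ => pdx f s.1 s.2)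
      = fun s => fderiv ℝ (fun s : ℝ × ℝ => f s.1 s.2) s ((1:ℝ), (0:ℝ)) :=
    funext fun s => pdx_fd hf s.1 s.2
  have r2 : (fun s : ℝ × ℝ => pdt f s.1 s.2)
      = fun s => fderiv ℝ (fun s : ℝ × ℝ => f s.1 s.2) s ((0:ℝ), (1:ℝ)) :=
    funext fun s => pdt_fd hf s.1 s.2
  rw [e1, e2, r1, r2,
    fderiv_clm_apply hg' (differentiableAt_const _),
    fderiv_clm_apply hg' (differentiableAt_const _)]
  simpa using hsymm

/-- The Miura transformation from the modified Boussinesq system to the good Boussinesq system. -/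
theorem miura_MB_to_GB (p q : ℝ → ℝ → ℝ)
    (hp : ContDiff ℝ (⊤ : ℕ∞) (fun s : ℝ × ℝ => p s.1 s.2))
    (hq : ContDiff ℝ (⊤ : ℕ∞) (fun s : ℝ × ℝ => q s.1 s.2))
    (hMB : ModifiedBoussinesq p q) :
    GoodBoussinesq
      (fun x t => -pdx p x t - (1/2) * (p x t)^2 - (3/2) * (q x t)^2)
      (fun x t => -pdx (pdx q) x t - 3 * p x t * pdx q x t - q x t * pdx p x t
        - 2 * q x t * (p x t)^2 + 2 * (q x t)^3) := by
  have sp : Sm p := hp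
  have sq : Sm q := hq
  have sp1 : Sm (pdx p) := sp.pdx'
  have sp2 : Sm (pdx (pdx p)) := sp1.pdx'
  have sp3 : Sm (pdx (pdx (pdx p))) := sp2.pdx'
  have sq1 : Sm (pdx q) := sq.pdx'
  have sq2 : Sm (pdx (pdx q)) := sq1.pdx'
  have sq3 : Sm (pdx (pdx (pdx q))) := sq2.pdx'
  have EP : ∀ x t : ℝ, pdt p x t
      = 2 * (pdx p x t * q x t) + 2 * (p x t * pdx q x t) + pdx (pdx q) x t := by
    intro x t
    have hprod : pdx (fun x t => p x t * q x t) x t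
        = pdx p x t * q x t + p x t * pdx q x t := ((sp.hdX x t).mul (sq.hdX x t)).deriv
    rw [(hMB x t).1, hprod]; ring
  have EQ : ∀ x t : ℝ, pdt q x t
      = (-(1/3)) * pdx (pdx p) x t + (2/3) * (p x t * pdx p x t)
        + (-2) * (q x t * pdx q x t) := by
    intro x t; rw [(hMB x t).2]; ring
  have EP1 : ∀ x t : ℝ, pdt (pdx p) x t
      = 2 * (pdx (pdx p) x t * q x t) + 4 * (pdx p x t * pdx q x t)
        + 2 * (p x t * pdx (pdx q) x t) + pdx (pdx (pdx q)) x t := by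
    intro x t
    rw [pd_comm sp x t]
    show deriv (fun x' => pdt p x' t) x = _
    rw [show (fun x' => pdt p x' t)
        = (fun x' => 2 * (pdx p x' t * q x' t) + 2 * (p x' t * pdx q x' t)
            + pdx (pdx q) x' t) from funext fun x' => EP x' t]
    have H := ((((sp1.hdX x t).mul (sq.hdX x t)).const_mul 2).add
        (((sp.hdX x t).mul (sq1.hdX x t)).const_mul 2)).add (sq2.hdX x t)
    exact H.deriv.trans (by ring)
  have EQ1 : ∀ x t : ℝ, pdt (pdx q) x t
      = (-(1/3)) * pdx (pdx (pdx p)) x t + (2/3) * (pdx p x t * pdx p x t)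
        + (2/3) * (p x t * pdx (pdx p) x t) + (-2) * (pdx q x t * pdx q x t)
        + (-2) * (q x t * pdx (pdx q) x t) := by
    intro x t
    rw [pd_comm sq x t]
    show deriv (fun x' => pdt q x' t) x = _
    rw [show (fun x' => pdt q x' t)
        = (fun x' => (-(1/3)) * pdx (pdx p) x' t + (2/3) * (p x' t * pdx p x' t)
            + (-2) * (q x' t * pdx q x' t)) from funext fun x' => EQ x' t]
    have H := (((sp2.hdX x t).const_mul (-(1/3))).add
        (((sp.hdX x t).mul (sp1.hdX x t)).const_mul (2/3))).add
        (((sq.hdX x t).mul (sq1.hdX x t)).const_mul (-2))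
    exact H.deriv.trans (by ring)
  have EQ2 : ∀ x t : ℝ, pdt (pdx (pdx q)) x t
      = (-(1/3)) * pdx (pdx (pdx (pdx p))) x t + 2 * (pdx p x t * pdx (pdx p) x t)
        + (2/3) * (p x t * pdx (pdx (pdx p)) x t) + (-6) * (pdx q x t * pdx (pdx q) x t)
        + (-2) * (q x t * pdx (pdx (pdx q)) x t) := by
    intro x t
    rw [pd_comm sq1 x t]
    show deriv (fun x' => pdt (pdx q) x' t) x = _
    rw [show (fun x' => pdt (pdx q) x' t)
        = (fun x' => (-(1/3)) * pdx (pdx (pdx p)) x' t + (2/3) * (pdx p x' t * pdx p x' t)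
            + (2/3) * (p x' t * pdx (pdx p) x' t) + (-2) * (pdx q x' t * pdx q x' t)
            + (-2) * (q x' t * pdx (pdx q) x' t)) from funext fun x' => EQ1 x' t]
    have Ha := ((sp3.hdX x t).const_mul (-(1/3))).add
        (((sp1.hdX x t).mul (sp1.hdX x t)).const_mul (2/3))
    have Hb := Ha.add (((sp.hdX x t).mul (sp2.hdX x t)).const_mul (2/3))
    have Hc := Hb.add (((sq1.hdX x t).mul (sq1.hdX x t)).const_mul (-2))
    have H := Hc.add (((sq.hdX x t).mul (sq2.hdX x t)).const_mul (-2))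
    exact H.deriv.trans (by ring)
  have W1 : ∀ x t : ℝ,
      pdx (fun x t => -pdx p x t - (1/2) * (p x t)^2 - (3/2) * (q x t)^2) x t
      = (-1) * pdx (pdx p) x t + (-1) * (p x t * pdx p x t) + (-3) * (q x t * pdx q x t) := by
    intro x t
    have H := ((sp1.hdX x t).neg.sub (((sp.hdX x t).pow 2).const_mul (1/2))).sub
        (((sq.hdX x t).pow 2).const_mul (3/2))
    exact H.deriv.trans (by push_cast; ring)
  have W2 : ∀ x t : ℝ,
      pdx (pdx (fun x t => -pdx p x t - (1/2) * (p x t)^2 - (3/2) * (q x t)^2)) x t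
      = (-1) * pdx (pdx (pdx p)) x t + (-1) * (pdx p x t * pdx p x t)
        + (-1) * (p x t * pdx (pdx p) x t) + (-3) * (pdx q x t * pdx q x t)
        + (-3) * (q x t * pdx (pdx q) x t) := by
    intro x t
    show deriv (fun x' =>
        pdx (fun x t => -pdx p x t - (1/2) * (p x t)^2 - (3/2) * (q x t)^2) x' t) x = _
    rw [show (fun x' =>
        pdx (fun x t => -pdx p x t - (1/2) * (p x t)^2 - (3/2) * (q x t)^2) x' t)
        = (fun x' => (-1) * pdx (pdx p) x' t + (-1) * (p x' t * pdx p x' t)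
            + (-3) * (q x' t * pdx q x' t)) from funext fun x' => W1 x' t]
    have H := (((sp2.hdX x t).const_mul (-1)).add
        (((sp.hdX x t).mul (sp1.hdX x t)).const_mul (-1))).add
        (((sq.hdX x t).mul (sq1.hdX x t)).const_mul (-3))
    exact H.deriv.trans (by ring)
  intro x t
  constructor
  · show deriv (fun t' => -pdx p x t' - (1/2) * (p x t')^2 - (3/2) * (q x t')^2) t
      = deriv (fun x' => -pdx (pdx q) x' t - 3 * p x' t * pdx q x' t - q x' t * pdx p x' t
          - 2 * q x' t * (p x' t)^2 + 2 * (q x' t)^3) x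
    have HL := ((sp1.hdT x t).neg.sub (((sp.hdT x t).pow 2).const_mul (1/2))).sub
        (((sq.hdT x t).pow 2).const_mul (3/2))
    have HRa := (sq2.hdX x t).neg.sub (((sp.hdX x t).const_mul 3).mul (sq1.hdX x t))
    have HRb := HRa.sub ((sq.hdX x t).mul (sp1.hdX x t))
    have HRc := HRb.sub (((sq.hdX x t).const_mul 2).mul ((sp.hdX x t).pow 2))
    have HR := HRc.add (((sq.hdX x t).pow 3).const_mul 2)
    erw [HL.deriv, HR.deriv, EP x t, EQ x t, EP1 x t]
    simp only [Pi.pow_apply]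
    push_cast
    ring
  · show deriv (fun t' => -pdx (pdx q) x t' - 3 * p x t' * pdx q x t' - q x t' * pdx p x t'
          - 2 * q x t' * (p x t')^2 + 2 * (q x t')^3) t
      + (1/3) * deriv (fun x' =>
          pdx (pdx (fun x t => -pdx p x t - (1/2) * (p x t)^2 - (3/2) * (q x t)^2)) x' t) x
      + (4/3) * deriv (fun x' =>
          (-pdx p x' t - (1/2) * (p x' t)^2 - (3/2) * (q x' t)^2)^2) x = 0
    have HTa := (sq2.hdT x t).neg.sub (((sp.hdT x t).const_mul 3).mul (sq1.hdT x t))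
    have HTb := HTa.sub ((sq.hdT x t).mul (sp1.hdT x t))
    have HTc := HTb.sub (((sq.hdT x t).const_mul 2).mul ((sp.hdT x t).pow 2))
    have HT := HTc.add (((sq.hdT x t).pow 3).const_mul 2)
    rw [show (fun x' =>
        pdx (pdx (fun x t => -pdx p x t - (1/2) * (p x t)^2 - (3/2) * (q x t)^2)) x' t)
        = (fun x' => (-1) * pdx (pdx (pdx p)) x' t + (-1) * (pdx p x' t * pdx p x' t)
            + (-1) * (p x' t * pdx (pdx p) x' t) + (-3) * (pdx q x' t * pdx q x' t)
            + (-3) * (q x' t * pdx (pdx q) x' t)) from funext fun x' => W2 x' t]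
    have H3a := ((sp3.hdX x t).const_mul (-1)).add
        (((sp1.hdX x t).mul (sp1.hdX x t)).const_mul (-1))
    have H3b := H3a.add (((sp.hdX x t).mul (sp2.hdX x t)).const_mul (-1))
    have H3c := H3b.add (((sq1.hdX x t).mul (sq1.hdX x t)).const_mul (-3))
    have H3 := H3c.add (((sq.hdX x t).mul (sq2.hdX x t)).const_mul (-3))
    have Hw := ((sp1.hdX x t).neg.sub (((sp.hdX x t).pow 2).const_mul (1/2))).sub
        (((sq.hdX x t).pow 2).const_mul (3/2))
    erw [HT.deriv, H3.deriv, (Hw.pow 2).deriv, EQ2 x t, EP x t, EQ1 x t, EQ x t, EP1 x t]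
    simp only [Pi.pow_apply, Pi.sub_apply, Pi.neg_apply]
    push_cast
    ring
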